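/- Let N ≥ 2 and let ℓ ≥ 1 be an integer with ℓ ≡ N (mod 2) such that ℓ is not an odd multiple of N. Then 2^{ℓ} · p_ℓ^{(N)} = Σ_{t = ⌊((2−ℓ)/N − 1)/2⌋}^{⌊(ℓ/N − 1)/2⌋} (−1)^t · A(ℓ−1, (ℓ − (2t+1)N)/2 ), where the sum is over integers t in the indicated range (note ℓ − (2t+1)N is always even since ℓ ≡ N mod 2). -/

import Mathlib

/-!
With `θ = (2k+1)π/(2N)` and `ℓ = n + 1`, induction on `n` using Pascal's rule for `A` gives
`2^ℓ sin θ cos^n θ = ∑_j A(n, j) sin((ℓ - 2j)θ)`. Multiplying the alternating sum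
`∑_k (-1)^k sin(m θ_k)` by `2 cos(mπ/(2N))` makes it telescope to `± sin(mπ) = 0`, so it vanishes
unless `cos(mπ/(2N)) = 0`, i.e. `m = (2t+1)N`, when every term equals `(-1)^t`. Hence only the
indices `j = (ℓ - (2t+1)N)/2` survive in `2^ℓ p_ℓ`.
-/

/-- The probability numbers `p_ℓ^{(N)}`:  `p_0^{(N)} = 0` and for `ℓ ≥ 1`,
`p_ℓ^{(N)} = (1/N) ∑_{k=1}^{N} (-1)^{k+1} sin θ_k cos^{ℓ-1} θ_k` with `θ_k = (2k-1)π/(2N)`. -/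
noncomputable def probNum (N ℓ : ℕ) : ℝ :=
  if ℓ = 0 then 0 else
    (1 / N) * ∑ k ∈ Finset.range N,
      (-1 : ℝ) ^ k * Real.sin ((2 * k + 1) * Real.pi / (2 * N)) *
        Real.cos ((2 * k + 1) * Real.pi / (2 * N)) ^ (ℓ - 1)


/-- Catalan-triangle coefficients `A(n,k) = C(n,k) - C(n,k-1)`,
with the convention `C(n,j) = 0` for `j < 0` (or `j > n`). -/
def catA (n : ℕ) (k : ℤ) : ℤ :=
  (if 0 ≤ k then (n.choose k.toNat : ℤ) else 0) -
    (if 0 ≤ k - 1 then (n.choose (k - 1).toNat : ℤ) else 0)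

open Finset Real

def intChoose (n : ℕ) (k : ℤ) : ℤ := if 0 ≤ k then (n.choose k.toNat : ℤ) else 0

lemma catA_eq_intChoose_sub (n : ℕ) (k : ℤ) : catA n k = intChoose n k - intChoose n (k - 1) :=
  rfl

lemma intChoose_succ (n : ℕ) (k : ℤ) :
    intChoose (n + 1) k = intChoose n k + intChoose n (k - 1) := by
  unfold intChoose
  obtain hk | rfl | hk := lt_trichotomy k 0
  · rw [if_neg (by omega), if_neg (by omega), if_neg (by omega), add_zero]
  · simp
  · rw [if_pos hk.le, if_pos hk.le, if_pos (by omega),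
      show k.toNat = (k - 1).toNat + 1 by omega, Nat.choose_succ_succ]
    push_cast; ring

lemma catA_succ (n : ℕ) (k : ℤ) : catA (n + 1) k = catA n k + catA n (k - 1) := by
  simp only [catA_eq_intChoose_sub, intChoose_succ]; ring

lemma catA_of_neg {n : ℕ} {k : ℤ} (hk : k < 0) : catA n k = 0 := by
  rw [catA, if_neg (by omega), if_neg (by omega), sub_self]

lemma catA_of_lt {n : ℕ} {k : ℤ} (hk : (n : ℤ) + 1 < k) : catA n k = 0 := by
  rw [catA, if_pos (by omega), if_pos (by omega), Nat.choose_eq_zero_of_lt (by omega),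
    Nat.choose_eq_zero_of_lt (by omega), sub_self]

lemma two_pow_mul_sin_mul_cos_pow (θ : ℝ) (n : ℕ) :
    2 ^ (n + 1) * (sin θ * cos θ ^ n) =
      ∑ j ∈ range (n + 2), (catA n j : ℝ) * sin ((n + 1 - 2 * j) * θ) := by
  induction n with
  | zero => simp [sum_range_succ, catA, two_mul]
  | succ n ih =>
    set s : ℕ → ℝ := fun j => sin ((n + 1 + 1 - 2 * j) * θ)
    have product_to_sum (j : ℕ) :
        2 * cos θ * sin ((n + 1 - 2 * j) * θ) = s j + s (j + 1) := by
      simp only [s]; push_cast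
      rw [show (n + 1 + 1 - 2 * (j + 1) : ℝ) * θ = (n + 1 - 2 * j) * θ - θ by ring,
        show (n + 1 + 1 - 2 * j : ℝ) * θ = (n + 1 - 2 * j) * θ + θ by ring, sin_add, sin_sub]
      ring
    calc 2 ^ (n + 1 + 1) * (sin θ * cos θ ^ (n + 1))
        = 2 * cos θ * (2 ^ (n + 1) * (sin θ * cos θ ^ n)) := by ring
      _ = ∑ j ∈ range (n + 2), (catA n j : ℝ) * s j +
            ∑ j ∈ range (n + 2), (catA n j : ℝ) * s (j + 1) := by
        rw [ih, mul_sum, ← sum_add_distrib]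
        refine sum_congr rfl fun j _ => ?_
        rw [mul_left_comm, product_to_sum]; ring
      _ = ∑ j ∈ range (n + 3), (catA n j : ℝ) * s j +
            ∑ j ∈ range (n + 3), (catA n (j - 1) : ℝ) * s j := by
        rw [sum_range_succ _ (n + 2), sum_range_succ' _ (n + 2), catA_of_lt (by omega),
          catA_of_neg (by omega)]
        simp
      _ = _ := by
        rw [← sum_add_distrib]
        refine sum_congr rfl fun j _ => ?_
        rw [catA_succ]; push_cast; ring

lemma two_mul_cos_mul_sum_neg_one_pow_mul_sin (φ : ℝ) (N : ℕ) :
    2 * cos φ * ∑ k ∈ range N, (-1) ^ k * sin ((2 * k + 1) * φ) = -(-1) ^ N * sin (2 * N * φ) := by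
  induction N with
  | zero => simp
  | succ N ih =>
    rw [sum_range_succ, mul_add, ih]
    push_cast
    rw [show 2 * (N + 1) * φ = (2 * N + 1) * φ + φ by ring,
      show 2 * N * φ = (2 * N + 1) * φ - φ by ring, sin_add, sin_sub]
    ring

lemma sum_neg_one_pow_mul_sin_eq_zero {N : ℕ} {m : ℤ} (hm : ∀ t : ℤ, m ≠ (2 * t + 1) * N) :
    ∑ k ∈ range N, (-1) ^ k * sin (m * ((2 * k + 1) * π / (2 * N))) = 0 := by
  obtain rfl | hN := eq_or_ne N 0
  · simp
  have hcos : cos (m * π / (2 * N)) ≠ 0 := by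
    rw [Ne, cos_eq_zero_iff]
    rintro ⟨t, ht⟩
    refine hm t ?_
    field_simp at ht
    exact_mod_cast (by linear_combination ht : (m : ℝ) = (2 * t + 1) * N)
  have key := two_mul_cos_mul_sum_neg_one_pow_mul_sin (m * π / (2 * N)) N
  rw [show 2 * N * (m * π / (2 * N)) = m * π by field_simp, sin_int_mul_pi, mul_zero] at key
  simp_rw [show ∀ k : ℕ, m * ((2 * k + 1) * π / (2 * N)) = (2 * k + 1) * (m * π / (2 * N)) by
    intro k; ring]
  exact (mul_eq_zero.mp key).resolve_left (mul_ne_zero two_ne_zero hcos)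

lemma sum_neg_one_pow_mul_sin_of_eq_odd_mul {N : ℕ} (hN : N ≠ 0) {m t : ℤ}
    (hm : m = (2 * t + 1) * N) :
    ∑ k ∈ range N, (-1) ^ k * sin (m * ((2 * k + 1) * π / (2 * N))) = N * (-1) ^ t := by
  have term (k : ℕ) : (-1) ^ k * sin (m * ((2 * k + 1) * π / (2 * N))) = (-1 : ℝ) ^ t := by
    have : (m : ℝ) * ((2 * k + 1) * π / (2 * N)) = π / 2 + t * π + ((2 * t + 1) * k : ℤ) * π := by
      rw [hm]; push_cast; field_simp; ring
    rw [this, sin_add_int_mul_pi, sin_add_int_mul_pi, sin_pi_div_two, zpow_mul,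
      (odd_two_mul_add_one t).neg_one_zpow, zpow_natCast, ← mul_assoc, ← mul_pow]
    simp
  simp [term]

lemma le_floor_iff_two_mul_add_one_mul_le {N : ℕ} (hN : N ≠ 0) (b : ℚ) (t : ℤ) :
    t ≤ ⌊(b / N - 1) / 2⌋ ↔ (2 * t + 1) * N ≤ b := by
  rw [Int.le_floor, le_div_iff₀ two_pos, le_sub_iff_add_le, le_div_iff₀ (by positivity)]
  ring_nf

lemma sum_range_catA_mul_ite (n : ℕ) (x : ℤ) :
    ∑ j ∈ range (n + 2), (catA n j : ℝ) * (if (j : ℤ) = x then 1 else 0) = catA n x := by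
  simp only [mul_boole]
  obtain hx | hx := lt_or_ge x 0
  · rw [catA_of_neg hx, sum_eq_zero fun j _ => if_neg (by omega), Int.cast_zero]
  lift x to ℕ using hx
  simp only [Nat.cast_inj, sum_ite_eq', mem_range, ite_eq_left_iff, not_lt]
  intro hx
  rw [catA_of_lt (by omega), Int.cast_zero]

lemma inv_mul_sum_neg_one_pow_mul_sin_eq_sum_ite {N ℓ j : ℕ} (hN : 2 ≤ N)
    (hpar : (2 : ℤ) ∣ ℓ - N) (hj : j ≤ ℓ) :
    (N : ℝ)⁻¹ * ∑ k ∈ range N, (-1) ^ k * sin ((ℓ - 2 * j) * ((2 * k + 1) * π / (2 * N))) =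
      ∑ t ∈ Icc ⌊(((2 : ℚ) - ℓ) / N - 1) / 2⌋ ⌊((ℓ : ℚ) / N - 1) / 2⌋,
        (-1) ^ t * if (j : ℤ) = (ℓ - (2 * t + 1) * N) / 2 then 1 else 0 := by
  have hN0 : N ≠ 0 := by omega
  have solve (t : ℤ) : (j : ℤ) = (ℓ - (2 * t + 1) * N) / 2 ↔ (ℓ - 2 * j : ℤ) = (2 * t + 1) * N := by
    rw [show (2 * t + 1) * (N : ℤ) = 2 * (t * N) + N by ring]
    generalize t * (N : ℤ) = u
    omega
  rw [show (ℓ - 2 * j : ℝ) = ((ℓ - 2 * j : ℤ) : ℝ) by push_cast; ring]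
  by_cases h : ∃ t : ℤ, (ℓ - 2 * j : ℤ) = (2 * t + 1) * N
  · obtain ⟨t, ht⟩ := h
    rw [sum_neg_one_pow_mul_sin_of_eq_odd_mul hN0 ht, sum_eq_single t]
    · rw [if_pos ((solve t).mpr ht), inv_mul_cancel_left₀ (by positivity), mul_one]
    · intro s _ hst
      have hs : (ℓ - 2 * j : ℤ) ≠ (2 * s + 1) * N := fun hs =>
        hst (by have := mul_right_cancel₀ (by positivity) (hs.symm.trans ht); omega)
      rw [if_neg (mt (solve s).mp hs), mul_zero]
    · intro ht_mem
      refine absurd ?_ ht_mem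
      rw [mem_Icc, ← not_lt, Int.lt_iff_add_one_le, le_floor_iff_two_mul_add_one_mul_le hN0,
        le_floor_iff_two_mul_add_one_mul_le hN0]
      have hj' : (j : ℤ) ≤ ℓ := by exact_mod_cast hj
      constructor
      · exact_mod_cast (by linarith : ¬ (2 * (t + 1) + 1) * (N : ℤ) ≤ 2 - ℓ)
      · exact_mod_cast (by linarith : (2 * t + 1) * (N : ℤ) ≤ ℓ)
  · simp only [not_exists] at h
    rw [sum_neg_one_pow_mul_sin_eq_zero h, mul_zero]
    exact (sum_eq_zero fun t _ => by rw [if_neg (fun h' => h t ((solve t).mp h')), mul_zero]).symm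

theorem two_pow_mul_probNum_eq_sum_catA_general (N ℓ : ℕ) (hN : 2 ≤ N) (hℓ : 1 ≤ ℓ)
    (hmod : ℓ % 2 = N % 2) :
    (2 : ℝ) ^ ℓ * probNum N ℓ =
      ∑ t ∈ Finset.Icc ⌊((((2 : ℚ) - ℓ) / N) - 1) / 2⌋ ⌊(((ℓ : ℚ) / N) - 1) / 2⌋,
        (-1 : ℝ) ^ t * (catA (ℓ - 1) (((ℓ : ℤ) - (2 * t + 1) * N) / 2) : ℝ) := by
  obtain ⟨n, rfl⟩ : ∃ n, ℓ = n + 1 := ⟨ℓ - 1, by omega⟩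
  have hpar : (2 : ℤ) ∣ (n + 1 : ℕ) - N := by omega
  rw [probNum, if_neg n.succ_ne_zero, Nat.add_sub_cancel, one_div]
  set θ : ℕ → ℝ := fun k => (2 * k + 1) * π / (2 * N)
  set T := Icc ⌊((((2 : ℚ) - (n + 1 : ℕ)) / N) - 1) / 2⌋ ⌊((((n + 1 : ℕ) : ℚ) / N) - 1) / 2⌋
  calc (2 : ℝ) ^ (n + 1) * ((N : ℝ)⁻¹ * ∑ k ∈ range N, (-1) ^ k * sin (θ k) * cos (θ k) ^ n)
      = ∑ j ∈ range (n + 2), (catA n j : ℝ) *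
          ((N : ℝ)⁻¹ * ∑ k ∈ range N, (-1) ^ k * sin (((n + 1 : ℕ) - 2 * j) * θ k)) := by
        simp_rw [mul_sum]
        rw [sum_comm]
        refine sum_congr rfl fun k _ => ?_
        rw [show 2 ^ (n + 1) * ((N : ℝ)⁻¹ * ((-1) ^ k * sin (θ k) * cos (θ k) ^ n)) =
          (N : ℝ)⁻¹ * (-1) ^ k * (2 ^ (n + 1) * (sin (θ k) * cos (θ k) ^ n)) by ring,
          two_pow_mul_sin_mul_cos_pow, mul_sum]
        refine sum_congr rfl fun j _ => ?_
        push_cast; ring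
    _ = ∑ j ∈ range (n + 2), (catA n j : ℝ) *
          ∑ t ∈ T, (-1) ^ t * if (j : ℤ) = ((n + 1 : ℕ) - (2 * t + 1) * N) / 2 then 1 else 0 := by
        refine sum_congr rfl fun j hj => ?_
        rw [inv_mul_sum_neg_one_pow_mul_sin_eq_sum_ite hN hpar (Nat.le_of_lt_succ (mem_range.mp hj))]
    _ = ∑ t ∈ T, (-1 : ℝ) ^ t * (catA n (((n + 1 : ℕ) - (2 * t + 1) * N) / 2) : ℝ) := by
        simp only [mul_sum]
        rw [sum_comm]
        refine sum_congr rfl fun t _ => ?_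
        rw [← sum_range_catA_mul_ite, mul_sum]
        exact sum_congr rfl fun j _ => by ring

/-- For `ℓ ≡ N (mod 2)` with `ℓ` not an odd multiple of `N`:
`2^ℓ p_ℓ^{(N)} = ∑_{t=⌊((2-ℓ)/N-1)/2⌋}^{⌊(ℓ/N-1)/2⌋} (-1)^t A(ℓ-1, (ℓ-(2t+1)N)/2)`. -/
theorem two_pow_mul_probNum_eq_sum_catA (N ℓ : ℕ) (hN : 2 ≤ N) (hℓ : 1 ≤ ℓ)
    (hmod : ℓ % 2 = N % 2) (hodd : ¬∃ t : ℕ, ℓ = (2 * t + 1) * N) :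
    (2 : ℝ) ^ ℓ * probNum N ℓ =
      ∑ t ∈ Finset.Icc ⌊((((2 : ℚ) - ℓ) / N) - 1) / 2⌋ ⌊(((ℓ : ℚ) / N) - 1) / 2⌋,
        (-1 : ℝ) ^ t * (catA (ℓ - 1) (((ℓ : ℤ) - (2 * t + 1) * N) / 2) : ℝ) :=
  two_pow_mul_probNum_eq_sum_catA_general N ℓ hN hℓ hmod
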